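/- Let m ≥ 2 and let k ≥ 2 be an integer. For every non-negative integer n, (−1)^k · n · φ lies in the set R_k(t_α(n;k)) + ℤ, i.e. there is an integer j such that (−1)^k n φ − j ∈ R_k(t_α(n;k)). -/

import Mathlib

/-!
Put `α = (√d - m)/2 = [0; 1, m, 1, m, …]`, a root of `x² + m x - m`, so that `φ = α + m + 1` and
`β := 1 - α = 1/φ`. With `p_i` the numerators of the convergents, `θ_i := q_i α - p_i` equals
`α β^j` for `i = 2j` and `-β^(j+1)` for `i = 2j + 1`. Splitting
`n = t_α(n;k) + ∑_{i ≥ k} b_i(n) q_i` gives `n φ ≡ t_α(n;k) φ + T (mod 1)` with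
`T = ∑_{i ≥ k} b_i(n) θ_i`. Adding the digits one at a time, from the largest index down, using only
`b_i ≤ 1` (`i` even) and `b_i ≤ m` (`i` odd), gives `-α β^⌊k/2⌋ < T < β^⌊(k+1)/2⌋`, which puts
`(-1)^k T` in `A_k^(1)`. If `t_α(n;k) ≥ q_{k-1}` the digit `b_k(n)` is not maximal, for otherwise
`b_{k-1}(n) = 0` and `t_α(n;k) = t_α(n;k-1) < q_{k-1}`; this saving of one unit of `θ_k` shrinks the
bound to `A_k^(2)`.
-/

noncomputable section

/-- Denominators of the convergents of `α = [0; 1, m, 1, m, …]`: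
`q_0 = q_1 = 1`, `q_n = m·q_{n-1} + q_{n-2}` for even `n ≥ 2`, and
`q_n = q_{n-1} + q_{n-2}` for odd `n ≥ 3`. -/
def qseq (m : ℕ) : ℕ → ℕ
  | 0 => 1
  | 1 => 1
  | n + 2 => (if n % 2 = 0 then m else 1) * qseq m (n + 1) + qseq m n

/-- `b` assigns to each natural number `n` its (unique) Ostrowski `α`-digit
sequence for `α = [0; 1, m, 1, m, …]`: `n = ∑ i, b n i · q_i`, `b n 0 = 0`,
even-indexed digits are `≤ 1`, odd-indexed digits are `≤ m`, and if a digit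
(of positive index) attains its maximal allowed value then the previous digit
vanishes. -/
def IsOstrowskiDigits (m : ℕ) (b : ℕ → ℕ →₀ ℕ) : Prop :=
  (∀ n : ℕ, ((b n).sum fun i c => c * qseq m i) = n) ∧
  (∀ n : ℕ, b n 0 = 0) ∧
  (∀ n i : ℕ, i % 2 = 0 → b n i ≤ 1) ∧
  (∀ n i : ℕ, i % 2 = 1 → b n i ≤ m) ∧
  (∀ n i : ℕ, 1 ≤ i → b n i = (if i % 2 = 0 then 1 else m) → b n (i - 1) = 0)

/-- Ostrowski sum of digits `S_α(n)`. -/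
def Sα (b : ℕ → ℕ →₀ ℕ) (n : ℕ) : ℕ := (b n).sum fun _ c => c

/-- Truncation `t_α(n; k) = ∑_{0 ≤ i ≤ k-1} b_i(n) q_i`. -/
def tα (m : ℕ) (b : ℕ → ℕ →₀ ℕ) (k n : ℕ) : ℕ :=
  ∑ i ∈ Finset.range k, b n i * qseq m i

/-- `p_k(u) = (-1)^k u φ` where `φ = (m + 2 + √(m² + 4m))/2`. -/
def pk (m : ℕ) (k : ℕ) (u : ℤ) : ℝ :=
  (-1 : ℝ) ^ k * u * ((m + 2 + Real.sqrt (m ^ 2 + 4 * m)) / 2)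

/-- `φ = (m + 2 + √(m² + 4m))/2`. -/
def phi (m : ℕ) : ℝ := (m + 2 + Real.sqrt (m ^ 2 + 4 * m)) / 2

/-- The interval `A_k^{(1)}` (here `k₀ = ⌊k/2⌋`). -/
def A1 (m k : ℕ) : Set ℝ :=
  let d : ℝ := m ^ 2 + 4 * m
  let φ : ℝ := (m + 2 + Real.sqrt d) / 2
  let k₀ : ℕ := k / 2
  if k % 2 = 0 then
    Set.Ico ((m - Real.sqrt d) / (2 * φ ^ k₀)) (1 / φ ^ k₀)
  else
    Set.Ico (-(1 / φ ^ (k₀ + 1))) ((-m + Real.sqrt d) / (2 * φ ^ k₀))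

/-- The interval `A_k^{(2)}` (here `k₀ = ⌊k/2⌋`). -/
def A2 (m k : ℕ) : Set ℝ :=
  let d : ℝ := m ^ 2 + 4 * m
  let φ : ℝ := (m + 2 + Real.sqrt d) / 2
  let k₀ : ℕ := k / 2
  if k % 2 = 0 then
    Set.Ico ((m - Real.sqrt d) / (2 * φ ^ k₀)) (1 / φ ^ (k₀ + 1))
  else
    Set.Ico (-(1 / φ ^ (k₀ + 1))) ((-m - 1 + Real.sqrt d) / φ ^ k₀)

/-- The set `R_k(u) = p_k(u) + A_k^{(1)}` for `0 ≤ u < q_{k-1}` and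
`R_k(u) = p_k(u) + A_k^{(2)}` for `q_{k-1} ≤ u < q_k`. -/
def Rk (m k : ℕ) (u : ℕ) : Set ℝ :=
  (fun x => pk m k u + x) '' (if u < qseq m (k - 1) then A1 m k else A2 m k)

namespace Ostrowski

def maxDigit (m i : ℕ) : ℕ := if i % 2 = 0 then 1 else m

def alpha (m : ℕ) : ℝ := (Real.sqrt (m ^ 2 + 4 * m) - m) / 2

def beta (m : ℕ) : ℝ := 1 - alpha m

/-- The numerators `p_i` of the convergents of `α`. -/
def pseq (m : ℕ) : ℕ → ℕ
  | 0 => 0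
  | 1 => 1
  | n + 2 => maxDigit m (n + 1) * pseq m (n + 1) + pseq m n

def theta (m i : ℕ) : ℝ :=
  if i % 2 = 0 then alpha m * beta m ^ (i / 2) else -beta m ^ (i / 2 + 1)

variable {m : ℕ}

lemma sqrt_eq_two_mul_alpha_add (m : ℕ) : Real.sqrt (m ^ 2 + 4 * m) = 2 * alpha m + m := by
  unfold alpha; ring

lemma alpha_sq_add_mul_alpha (m : ℕ) : alpha m ^ 2 + m * alpha m = m := by
  have h := Real.sq_sqrt (by positivity : (0 : ℝ) ≤ m ^ 2 + 4 * m)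
  rw [sqrt_eq_two_mul_alpha_add] at h
  linear_combination h / 4

lemma alpha_add_beta (m : ℕ) : alpha m + beta m = 1 := by
  unfold beta; ring

lemma phi_eq (m : ℕ) : phi m = alpha m + m + 1 := by
  unfold phi; rw [sqrt_eq_two_mul_alpha_add]; ring

lemma inv_phi (m : ℕ) : (phi m)⁻¹ = beta m := by
  have hprod : phi m * beta m = 1 := by
    rw [phi_eq, beta]; linear_combination -alpha_sq_add_mul_alpha m
  exact inv_eq_of_mul_eq_one_right hprod

lemma alpha_pos (hm : 0 < m) : 0 < alpha m := by
  have : (m : ℝ) ^ 2 < m ^ 2 + 4 * m := by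
    have : (0 : ℝ) < m := by exact_mod_cast hm
    linarith
  have := Real.sqrt_lt_sqrt (by positivity) this
  rw [Real.sqrt_sq (by positivity), sqrt_eq_two_mul_alpha_add] at this
  linarith

lemma beta_pos (m : ℕ) : 0 < beta m := by
  have : Real.sqrt (m ^ 2 + 4 * m) < m + 2 := by
    rw [Real.sqrt_lt' (by positivity)]; nlinarith
  rw [sqrt_eq_two_mul_alpha_add] at this
  unfold beta; linarith

lemma add_alpha_mul_beta (m : ℕ) : (m + alpha m) * beta m = alpha m := by
  unfold beta; linear_combination -alpha_sq_add_mul_alpha m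

lemma qseq_add_two (m i : ℕ) :
    qseq m (i + 2) = maxDigit m (i + 1) * qseq m (i + 1) + qseq m i := by
  simp only [qseq, maxDigit]; congr 2; split_ifs <;> omega

lemma maxDigit_two_mul (m j : ℕ) : maxDigit m (2 * j) = 1 := by simp [maxDigit]

lemma maxDigit_two_mul_add_one (m j : ℕ) : maxDigit m (2 * j + 1) = m := by
  simp [maxDigit, Nat.add_mod]

lemma theta_two_mul (m j : ℕ) : theta m (2 * j) = alpha m * beta m ^ j := by
  simp [theta]

lemma theta_two_mul_add_one (m j : ℕ) : theta m (2 * j + 1) = -beta m ^ (j + 1) := by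
  simp [theta, Nat.add_mod, Nat.add_div]

lemma theta_add_two (m i : ℕ) :
    theta m (i + 2) = maxDigit m (i + 1) * theta m (i + 1) + theta m i := by
  obtain ⟨j, rfl | rfl⟩ := Nat.even_or_odd' i
  · rw [show 2 * j + 2 = 2 * (j + 1) by ring, theta_two_mul, theta_two_mul, theta_two_mul_add_one,
      maxDigit_two_mul_add_one]
    linear_combination beta m ^ j * add_alpha_mul_beta m
  · rw [show 2 * j + 1 + 2 = 2 * (j + 1) + 1 by ring, show 2 * j + 1 + 1 = 2 * (j + 1) by ring,
      theta_two_mul, theta_two_mul_add_one, theta_two_mul_add_one]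
    rw [maxDigit_two_mul, Nat.cast_one, beta]
    ring

theorem qseq_mul_alpha_sub_pseq (m : ℕ) : ∀ i, (qseq m i : ℝ) * alpha m - pseq m i = theta m i
  | 0 => by simp [qseq, pseq, theta]
  | 1 => by simp [qseq, pseq, theta, beta]
  | i + 2 => by
    rw [qseq_add_two, pseq, theta_add_two, ← qseq_mul_alpha_sub_pseq m i,
      ← qseq_mul_alpha_sub_pseq m (i + 1)]
    push_cast; ring

theorem exists_int_sub_eq_sum_theta (s : Finset ℕ) (F : ℕ → ℕ) :
    ∃ j : ℤ, ((∑ i ∈ s, F i * qseq m i : ℕ) : ℝ) * phi m - j = ∑ i ∈ s, F i * theta m i := by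
  refine ⟨∑ i ∈ s, F i * (qseq m i * (m + 1) + pseq m i), ?_⟩
  simp only [← qseq_mul_alpha_sub_pseq, phi_eq]
  push_cast
  rw [Finset.sum_mul, ← Finset.sum_sub_distrib]
  exact Finset.sum_congr rfl fun i _ => by ring

theorem mul_theta_add_mem_Ioo (hm : 0 < m) {c k : ℕ} (hc : c ≤ maxDigit m k) {S : ℝ}
    (hS : S ∈ Set.Ioo (-(alpha m * beta m ^ ((k + 1) / 2))) (beta m ^ ((k + 2) / 2))) :
    c * theta m k + S ∈ Set.Ioo (-(alpha m * beta m ^ (k / 2))) (beta m ^ ((k + 1) / 2)) := by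
  have hα := alpha_pos hm
  have hβ := beta_pos m
  obtain ⟨j, rfl | rfl⟩ := Nat.even_or_odd' k
  · have hc1 : (c : ℝ) ≤ 1 := by exact_mod_cast (maxDigit_two_mul m j) ▸ hc
    rw [show (2 * j + 1) / 2 = j by omega, show (2 * j + 2) / 2 = j + 1 by omega] at hS
    rw [show 2 * j / 2 = j by omega, show (2 * j + 1) / 2 = j by omega, theta_two_mul]
    have hθ : 0 ≤ alpha m * beta m ^ j := by positivity
    have hsum : alpha m * beta m ^ j + beta m ^ (j + 1) = beta m ^ j := by
      linear_combination beta m ^ j * alpha_add_beta m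
    constructor <;> nlinarith [hS.1, hS.2]
  · have hcm : (c : ℝ) ≤ m := by exact_mod_cast (maxDigit_two_mul_add_one m j) ▸ hc
    rw [show (2 * j + 1 + 1) / 2 = j + 1 by omega, show (2 * j + 1 + 2) / 2 = j + 1 by omega]
      at hS
    rw [show (2 * j + 1) / 2 = j by omega, show (2 * j + 1 + 1) / 2 = j + 1 by omega,
      theta_two_mul_add_one]
    have hsum : (m + alpha m) * beta m ^ (j + 1) = alpha m * beta m ^ j := by
      linear_combination beta m ^ j * add_alpha_mul_beta m
    have hθ : 0 ≤ beta m ^ (j + 1) := by positivity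
    constructor <;> nlinarith [hS.1, hS.2]

theorem sum_Ico_theta_mem_Ioo (hm : 0 < m) {F : ℕ → ℕ} (hF : ∀ i, F i ≤ maxDigit m i)
    {k N : ℕ} (hkN : k ≤ N) :
    ∑ i ∈ Finset.Ico k N, F i * theta m i ∈
      Set.Ioo (-(alpha m * beta m ^ (k / 2))) (beta m ^ ((k + 1) / 2)) := by
  induction hkN using Nat.decreasingInduction with
  | self =>
    have hα := alpha_pos hm
    have hβ := beta_pos m
    simp only [Finset.Ico_self, Finset.sum_empty, Set.mem_Ioo, Left.neg_neg_iff]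
    constructor <;> positivity
  | of_succ k hk ih =>
    rw [Finset.sum_eq_sum_Ico_succ_bot hk]
    exact mul_theta_add_mem_Ioo hm (hF k) ih

lemma one_div_phi_pow (m j : ℕ) : 1 / phi m ^ j = beta m ^ j := by
  rw [one_div, ← inv_pow, inv_phi]

lemma div_two_mul_phi_pow (m j : ℕ) (x : ℝ) : x / (2 * phi m ^ j) = x / 2 * beta m ^ j := by
  rw [← one_div_phi_pow]; ring

lemma A1_two_mul (m j : ℕ) :
    A1 m (2 * j) = Set.Ico (-(alpha m * beta m ^ j)) (beta m ^ j) := by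
  simp only [A1, Nat.mul_mod_right, if_true, Nat.mul_div_cancel_left j two_pos]
  rw [← phi, div_two_mul_phi_pow, one_div_phi_pow, sqrt_eq_two_mul_alpha_add]
  congr 1; ring

lemma A2_two_mul (m j : ℕ) :
    A2 m (2 * j) = Set.Ico (-(alpha m * beta m ^ j)) (beta m ^ (j + 1)) := by
  simp only [A2, Nat.mul_mod_right, if_true, Nat.mul_div_cancel_left j two_pos]
  rw [← phi, div_two_mul_phi_pow, one_div_phi_pow, sqrt_eq_two_mul_alpha_add]
  congr 1; ring

lemma two_mul_add_one_div_two (j : ℕ) : (2 * j + 1) / 2 = j := by omega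

lemma A1_two_mul_add_one (m j : ℕ) :
    A1 m (2 * j + 1) = Set.Ico (-beta m ^ (j + 1)) (alpha m * beta m ^ j) := by
  simp only [A1, Nat.mul_add_mod_self_left, Nat.one_mod, one_ne_zero, if_false,
    two_mul_add_one_div_two]
  rw [← phi, div_two_mul_phi_pow, one_div_phi_pow, sqrt_eq_two_mul_alpha_add]
  congr 1; ring

lemma A2_two_mul_add_one (m j : ℕ) :
    A2 m (2 * j + 1) = Set.Ico (-beta m ^ (j + 1)) ((2 * alpha m - 1) * beta m ^ j) := by
  simp only [A2, Nat.mul_add_mod_self_left, Nat.one_mod, one_ne_zero, if_false,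
    two_mul_add_one_div_two]
  rw [← phi, div_eq_mul_one_div _ (phi m ^ j)]
  simp only [one_div_phi_pow, sqrt_eq_two_mul_alpha_add]
  congr 1; ring

theorem neg_one_pow_mul_mem_A1 {k : ℕ} {T : ℝ}
    (hT : T ∈ Set.Ioo (-(alpha m * beta m ^ (k / 2))) (beta m ^ ((k + 1) / 2))) :
    (-1) ^ k * T ∈ A1 m k := by
  obtain ⟨j, rfl | rfl⟩ := Nat.even_or_odd' k
  · rw [show (2 * j + 1) / 2 = j by omega, show 2 * j / 2 = j by omega] at hT
    rw [A1_two_mul, (even_two_mul j).neg_one_pow, one_mul]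
    exact Set.Ioo_subset_Ico_self hT
  · rw [show (2 * j + 1 + 1) / 2 = j + 1 by omega, two_mul_add_one_div_two] at hT
    rw [A1_two_mul_add_one, (odd_two_mul_add_one j).neg_one_pow, neg_one_mul]
    exact ⟨by linarith [hT.2], by linarith [hT.1]⟩

theorem neg_one_pow_mul_sum_Ico_theta_mem_A2 (hm : 0 < m) {F : ℕ → ℕ}
    (hF : ∀ i, F i ≤ maxDigit m i) {k N : ℕ} (hkN : k < N) (hFk : F k < maxDigit m k) :
    (-1) ^ k * ∑ i ∈ Finset.Ico k N, F i * theta m i ∈ A2 m k := by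
  rw [Finset.sum_eq_sum_Ico_succ_bot hkN]
  have hS := sum_Ico_theta_mem_Ioo hm hF (Nat.succ_le_of_lt hkN)
  obtain ⟨j, rfl | rfl⟩ := Nat.even_or_odd' k
  · have hF0 : F (2 * j) = 0 := by rw [maxDigit_two_mul] at hFk; omega
    rw [show (2 * j + 1) / 2 = j by omega, show (2 * j + 1 + 1) / 2 = j + 1 by omega] at hS
    rw [A2_two_mul, (even_two_mul j).neg_one_pow, one_mul, hF0, Nat.cast_zero, zero_mul,
      zero_add]
    exact ⟨hS.1.le, hS.2⟩
  · have hFm : (F (2 * j + 1) : ℝ) ≤ m - 1 := by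
      rw [maxDigit_two_mul_add_one] at hFk
      rw [le_sub_iff_add_le]; exact_mod_cast hFk
    rw [show (2 * j + 1 + 1) / 2 = j + 1 by omega, show (2 * j + 1 + 1 + 1) / 2 = j + 1 by omega]
      at hS
    rw [A2_two_mul_add_one, (odd_two_mul_add_one j).neg_one_pow, neg_one_mul,
      theta_two_mul_add_one]
    have hβ : 0 ≤ beta m ^ (j + 1) := (pow_pos (beta_pos m) _).le
    have hsum : (m - 1 + alpha m) * beta m ^ (j + 1) = (2 * alpha m - 1) * beta m ^ j := by
      linear_combination beta m ^ j * (add_alpha_mul_beta m - alpha_add_beta m)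
    constructor <;> nlinarith [hS.1, hS.2]

end Ostrowski

namespace IsOstrowskiDigits

open Ostrowski

variable {m : ℕ} {b : ℕ → ℕ →₀ ℕ}

theorem le_maxDigit (hb : IsOstrowskiDigits m b) (n i : ℕ) : b n i ≤ maxDigit m i := by
  unfold maxDigit
  split_ifs with hi
  · exact hb.2.2.1 n i hi
  · exact hb.2.2.2.1 n i (Nat.mod_two_ne_zero.1 hi)

theorem tα_lt_qseq (hb : IsOstrowskiDigits m b) (n : ℕ) : ∀ j, tα m b j n < qseq m j
  | 0 => by simp [tα, qseq]
  | 1 => by simp [tα, qseq, hb.2.1 n]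
  | j + 2 => by
    have ih₀ := tα_lt_qseq hb n j
    have ih₁ := tα_lt_qseq hb n (j + 1)
    unfold tα at *
    rw [Finset.sum_range_succ, qseq_add_two]
    rcases (hb.le_maxDigit n (j + 1)).lt_or_eq with hlt | heq
    · have := Nat.mul_le_mul_right (qseq m (j + 1)) hlt
      rw [Nat.succ_mul] at this
      omega
    · have hj : b n j = 0 := hb.2.2.2.2 n (j + 1) (Nat.le_add_left 1 j) heq
      rw [Finset.sum_range_succ, hj, zero_mul, add_zero, heq]
      omega

theorem lt_maxDigit_of_qseq_le_tα (hb : IsOstrowskiDigits m b) {n k : ℕ} (hk : 1 ≤ k)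
    (h : qseq m (k - 1) ≤ tα m b k n) : b n k < maxDigit m k := by
  refine (hb.le_maxDigit n k).lt_of_ne fun heq => ?_
  have hprev : b n (k - 1) = 0 := hb.2.2.2.2 n k hk heq
  have htrunc : tα m b k n = tα m b (k - 1) n := by
    obtain ⟨k, rfl⟩ := Nat.exists_eq_add_of_le' hk
    rw [Nat.add_sub_cancel] at hprev ⊢
    rw [tα, Finset.sum_range_succ, hprev, zero_mul, add_zero, tα]
  have := hb.tα_lt_qseq n (k - 1)
  omega

theorem exists_tα_add_sum_Ico (hb : IsOstrowskiDigits m b) (n k : ℕ) :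
    ∃ N, k < N ∧ tα m b k n + ∑ i ∈ Finset.Ico k N, b n i * qseq m i = n := by
  obtain ⟨N, hN⟩ := (b n).support.exists_nat_subset_range
  refine ⟨max N (k + 1), by omega, ?_⟩
  calc tα m b k n + ∑ i ∈ Finset.Ico k (max N (k + 1)), b n i * qseq m i
      = ∑ i ∈ Finset.range (max N (k + 1)), b n i * qseq m i :=
        Finset.sum_range_add_sum_Ico _ (by omega)
    _ = (b n).sum fun i c => c * qseq m i :=
        ((b n).sum_of_support_subset (hN.trans (Finset.range_mono (le_max_left _ _)))
          (fun i c => c * qseq m i) fun _ _ => zero_mul _).symm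
    _ = n := hb.1 n

end IsOstrowskiDigits

open Ostrowski

/-- For `k ≥ 2` and every `n ≥ 0`, `(-1)^k n φ ∈ R_k(t_α(n;k)) + ℤ`. -/
theorem mem_Rk_truncation (m : ℕ) (hm : 2 ≤ m)
    (b : ℕ → ℕ →₀ ℕ) (hb : IsOstrowskiDigits m b)
    (k : ℕ) (hk : 2 ≤ k) (n : ℕ) :
    ∃ j : ℤ, (-1 : ℝ) ^ k * n * phi m - j ∈ Rk m k (tα m b k n) := by
  obtain ⟨N, hkN, hsplit⟩ := hb.exists_tα_add_sum_Ico n k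
  obtain ⟨j, hj⟩ := exists_int_sub_eq_sum_theta (m := m) (Finset.Ico k N) (b n)
  have hdecomp : (-1 : ℝ) ^ k * n * phi m - ((-1) ^ k * j : ℤ) =
      pk m k (tα m b k n) + (-1) ^ k * ∑ i ∈ Finset.Ico k N, b n i * theta m i := by
    have hn : (n : ℝ) = tα m b k n + ∑ i ∈ Finset.Ico k N, b n i * qseq m i := by
      exact_mod_cast hsplit.symm
    rw [← hj, hn, pk, ← phi]
    push_cast; ring
  refine ⟨(-1) ^ k * j, hdecomp ▸ Set.mem_image_of_mem _ ?_⟩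
  split_ifs with hu
  · exact neg_one_pow_mul_mem_A1 (sum_Ico_theta_mem_Ioo (by omega) (hb.le_maxDigit n) hkN.le)
  · exact neg_one_pow_mul_sum_Ico_theta_mem_A2 (by omega) (hb.le_maxDigit n) hkN
      (hb.lt_maxDigit_of_qseq_le_tα (by omega) (not_lt.1 hu))

end
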